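/- If ξ is a Poisson random variable with parameter λ > 0 and p ∈ (1,2], then E|ξ - λ|^p ≤ 2^(2-p) · λ. -/

import Mathlib

/-!
Weighted AM-GM with weights `2 - p` and `p - 1` gives the pointwise bound
`|x| ^ p ≤ 2 ^ (2 - p) * ((2 - p) * |x| / 2 + (p - 1) * x ^ 2)`. Taking expectations at
`x = ξ - λ`, with `E|ξ - λ| ≤ E ξ + λ = 2λ` and `E (ξ - λ)² = λ` (both read off the factorial
moments `E[ξ (ξ - 1) ⋯ (ξ - k + 1)] = λ ^ k`), the right-hand side becomes
`2 ^ (2 - p) * ((2 - p) * λ + (p - 1) * λ) = 2 ^ (2 - p) * λ`.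
-/

open MeasureTheory ProbabilityTheory Finset
open scoped NNReal Nat

theorem abs_rpow_le_mul_abs_add_sq {p c : ℝ} (hc : 0 < c) (hp1 : 1 ≤ p) (hp2 : p ≤ 2) (x : ℝ) :
    |x| ^ p ≤ c ^ (2 - p) * ((2 - p) * (|x| / c) + (p - 1) * x ^ 2) := by
  have hcp : c ^ (2 - p) * c ^ (p - 2) = 1 := by
    rw [← Real.rpow_add hc, show 2 - p + (p - 2) = 0 by ring, Real.rpow_zero]
  have interpolate : (|x| / c) ^ (2 - p) * (x ^ 2) ^ (p - 1) = c ^ (p - 2) * |x| ^ p := by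
    rw [Real.div_rpow (abs_nonneg x) hc.le, ← sq_abs, ← Real.rpow_natCast, ← Real.rpow_mul
      (abs_nonneg x), div_mul_eq_mul_div, ← Real.rpow_add_of_nonneg (abs_nonneg x) (by linarith)
      (by push_cast; linarith), show 2 - p + ((2 : ℕ) : ℝ) * (p - 1) = p by push_cast; ring,
      show p - 2 = -(2 - p) by ring, Real.rpow_neg hc.le, div_eq_inv_mul]
  have amgm := Real.geom_mean_le_arith_mean2_weighted (by linarith : (0:ℝ) ≤ 2 - p)
    (by linarith : (0:ℝ) ≤ p - 1) (by positivity : (0:ℝ) ≤ |x| / c) (sq_nonneg x) (by ring)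
  calc |x| ^ p = c ^ (2 - p) * (c ^ (p - 2) * |x| ^ p) := by rw [← mul_assoc, hcp, one_mul]
    _ ≤ _ := by rw [← interpolate]; gcongr

namespace ProbabilityTheory

theorem hasSum_poissonMeasure_mul_descFactorial (r : ℝ≥0) (k : ℕ) :
    HasSum (fun n : ℕ ↦ Real.exp (-r) * r ^ n / n ! * n.descFactorial k) (r ^ k) := by
  rw [← hasSum_nat_add_iff' k, sum_eq_zero fun i hi ↦ by
    rw [Nat.descFactorial_of_lt (mem_range.1 hi), Nat.cast_zero, mul_zero], sub_zero]
  have h := (hasSum_one_poissonMeasure r).mul_left ((r : ℝ) ^ k)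
  rw [mul_one] at h
  refine h.congr_fun fun n ↦ ?_
  have hfac := Nat.factorial_mul_descFactorial (Nat.le_add_left k n)
  rw [Nat.add_sub_cancel] at hfac
  rw [← hfac]
  push_cast
  field_simp
  ring

theorem lintegral_ofReal_poissonMeasure {r : ℝ≥0} {g : ℕ → ℝ} {a : ℝ} (hg : ∀ n, 0 ≤ g n)
    (h : HasSum (fun n : ℕ ↦ Real.exp (-r) * r ^ n / n ! * g n) a) :
    ∫⁻ n, ENNReal.ofReal (g n) ∂poissonMeasure r = ENNReal.ofReal a := by
  simp_rw [lintegral_countable', poissonMeasure_singleton]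
  rw [← h.tsum_eq,
    ENNReal.ofReal_tsum_of_nonneg (fun n ↦ by have := hg n; positivity) h.summable]
  congr 1 with n
  rw [← ENNReal.ofReal_mul (hg n), mul_comm]

theorem lintegral_natCast_poissonMeasure (r : ℝ≥0) :
    ∫⁻ n, ENNReal.ofReal n ∂poissonMeasure r = ENNReal.ofReal r :=
  lintegral_ofReal_poissonMeasure (fun n ↦ n.cast_nonneg) <| by
    simpa using hasSum_poissonMeasure_mul_descFactorial r 1

theorem lintegral_sub_sq_poissonMeasure (r : ℝ≥0) :
    ∫⁻ n, ENNReal.ofReal ((n - r) ^ 2) ∂poissonMeasure r = ENNReal.ofReal r := by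
  refine lintegral_ofReal_poissonMeasure (fun n ↦ sq_nonneg _) ?_
  have h := (hasSum_poissonMeasure_mul_descFactorial r 2).add
    (((hasSum_poissonMeasure_mul_descFactorial r 1).mul_left (1 - 2 * (r : ℝ))).add
      ((hasSum_poissonMeasure_mul_descFactorial r 0).mul_left ((r : ℝ) ^ 2)))
  convert h using 1
  · ext n
    rw [Nat.cast_descFactorial_two, Nat.descFactorial_one, Nat.descFactorial_zero]
    push_cast
    ring
  · ring

theorem lintegral_abs_sub_poissonMeasure_le (r : ℝ≥0) :
    ∫⁻ n, ENNReal.ofReal |(n : ℝ) - r| ∂poissonMeasure r ≤ ENNReal.ofReal (2 * r) :=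
  calc ∫⁻ n, ENNReal.ofReal |(n : ℝ) - r| ∂poissonMeasure r
      ≤ ∫⁻ n, (ENNReal.ofReal n + ENNReal.ofReal r) ∂poissonMeasure r := by
        refine lintegral_mono fun n ↦ ?_
        rw [← ENNReal.ofReal_add n.cast_nonneg r.coe_nonneg]
        exact ENNReal.ofReal_le_ofReal <| abs_sub_le_iff.2
          ⟨by linarith [r.coe_nonneg], by linarith [n.cast_nonneg (α := ℝ)]⟩
    _ = ENNReal.ofReal (2 * r) := by
        rw [lintegral_add_right _ measurable_const, lintegral_const, measure_univ, mul_one,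
          lintegral_natCast_poissonMeasure, ← ENNReal.ofReal_add r.coe_nonneg r.coe_nonneg, two_mul]

theorem lintegral_abs_sub_rpow_poissonMeasure_le (r : ℝ≥0) {p : ℝ} (hp1 : 1 ≤ p) (hp2 : p ≤ 2) :
    ∫⁻ n, ENNReal.ofReal (|(n : ℝ) - r| ^ p) ∂poissonMeasure r ≤
      ENNReal.ofReal (2 ^ (2 - p) * r) := by
  set a : ℝ := 2 ^ (2 - p) * (2 - p) / 2
  set b : ℝ := 2 ^ (2 - p) * (p - 1)
  have h2p : (0 : ℝ) ≤ 2 ^ (2 - p) := by positivity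
  have ha : 0 ≤ a := div_nonneg (mul_nonneg h2p (by linarith)) zero_le_two
  have hb : 0 ≤ b := mul_nonneg h2p (by linarith)
  calc ∫⁻ n, ENNReal.ofReal (|(n : ℝ) - r| ^ p) ∂poissonMeasure r
      ≤ ∫⁻ n, (ENNReal.ofReal a * ENNReal.ofReal |(n : ℝ) - r| +
          ENNReal.ofReal b * ENNReal.ofReal ((n - r) ^ 2)) ∂poissonMeasure r := by
        refine lintegral_mono fun n ↦ ?_
        rw [← ENNReal.ofReal_mul ha, ← ENNReal.ofReal_mul hb, ← ENNReal.ofReal_add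
          (mul_nonneg ha (abs_nonneg _)) (mul_nonneg hb (sq_nonneg _))]
        refine ENNReal.ofReal_le_ofReal <|
          (abs_rpow_le_mul_abs_add_sq two_pos hp1 hp2 _).trans_eq ?_
        ring
    _ = ENNReal.ofReal a * ∫⁻ n, ENNReal.ofReal |(n : ℝ) - r| ∂poissonMeasure r +
          ENNReal.ofReal b * ∫⁻ n, ENNReal.ofReal ((n - r) ^ 2) ∂poissonMeasure r := by
        rw [lintegral_add_left (.of_discrete), lintegral_const_mul _ .of_discrete,
          lintegral_const_mul _ .of_discrete]
    _ ≤ ENNReal.ofReal a * ENNReal.ofReal (2 * r) + ENNReal.ofReal b * ENNReal.ofReal r := by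
        rw [lintegral_sub_sq_poissonMeasure]
        gcongr
        exact lintegral_abs_sub_poissonMeasure_le r
    _ = ENNReal.ofReal (2 ^ (2 - p) * r) := by
        rw [← ENNReal.ofReal_mul ha, ← ENNReal.ofReal_mul hb, ← ENNReal.ofReal_add
          (by positivity) (by positivity)]
        congr 1
        ring

end ProbabilityTheory

theorem poisson_central_moment_bound_general
    (Ω : Type*) [MeasureSpace Ω]
    (ξ : Ω → ℕ) (hmeas : Measurable ξ) (lam p : ℝ) (hlam : 0 < lam)
    (hp1 : 1 < p) (hp2 : p ≤ 2)
    (hdist : ∀ k : ℕ, volume {ω | ξ ω = k}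
      = ENNReal.ofReal (Real.exp (-lam) * lam ^ k / (Nat.factorial k))) :
    ∫⁻ ω, ENNReal.ofReal (|(ξ ω : ℝ) - lam| ^ p)
      ≤ ENNReal.ofReal (2 ^ (2 - p) * lam) := by
  have hr : (lam.toNNReal : ℝ) = lam := Real.coe_toNNReal lam hlam.le
  have hlaw : HasLaw ξ (poissonMeasure lam.toNNReal) := by
    refine ⟨hmeas.aemeasurable, Measure.ext_of_singleton fun k ↦ ?_⟩
    rw [Measure.map_apply hmeas (measurableSet_singleton k), poissonMeasure_singleton, hr]
    exact hdist k
  rw [hlaw.lintegral_comp (f := fun n : ℕ ↦ ENNReal.ofReal (|(n : ℝ) - lam| ^ p)) .of_discrete]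
  simpa only [hr] using lintegral_abs_sub_rpow_poissonMeasure_le lam.toNNReal hp1.le hp2

/-- If ξ ~ Poisson(λ) with λ > 0 and p ∈ (1,2], then E|ξ - λ|^p ≤ 2^(2-p)·λ. -/
theorem poisson_central_moment_bound
    (Ω : Type*) [MeasureSpace Ω] [IsProbabilityMeasure (volume : Measure Ω)]
    (ξ : Ω → ℕ) (hmeas : Measurable ξ) (lam p : ℝ) (hlam : 0 < lam)
    (hp1 : 1 < p) (hp2 : p ≤ 2)
    (hdist : ∀ k : ℕ, volume {ω | ξ ω = k}
      = ENNReal.ofReal (Real.exp (-lam) * lam ^ k / (Nat.factorial k))) :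
    ∫⁻ ω, ENNReal.ofReal (|(ξ ω : ℝ) - lam| ^ p)
      ≤ ENNReal.ofReal (2 ^ (2 - p) * lam) :=
  poisson_central_moment_bound_general Ω ξ hmeas lam p hlam hp1 hp2 hdist
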